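/- arXiv:2112.12134 — 3 statements merged into one kernel-verified Lean document; each statement's English description precedes it below -/
import Mathlib

section
/- Telescoping lemma for nonincreasing cumulative parameters: Let E be a real normed vector space, ψ: E → ℝ ∪ {+∞} proper, convex, lower semicontinuous, a ∈ E and a^ψ ∈ ∂ψ(a). Let T ≥ 1, η_1 ≥ η_2 ≥ … ≥ η_{T+1} > 0, and v_1,…,v_{T+1} ∈ E* with v_1 = a^ψ. Let z ∈ dom ψ, and assume ψ*(v_t) < +∞ and ψ*(a^ψ + (η_t/η_{t+1})(v_{t+1} − a^ψ)) < +∞ for all t ≤ T. Then Σ_{t=1}^T (1/η_t)[B_ψ(z, v_t) − B_ψ(z, a^ψ + (η_t/η_{t+1})(v_{t+1} − a^ψ))] ≤ (1/η_{T+1}) B_ψ(z, a^ψ). -/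
open Finset

/-- Fenchel conjugate of an extended-real-valued function on a normed space. -/
noncomputable def fconj {E : Type*} [NormedAddCommGroup E] [NormedSpace ℝ E]
    (ψ : E → EReal) (p : E →L[ℝ] ℝ) : EReal :=
  ⨆ x : E, ((p x : ℝ) : EReal) - ψ x

/-- Generalized Bregman divergence `B_ψ(x, y*) = ψ(x) + ψ*(y*) − ⟨y*, x⟩`. -/
noncomputable def breg {E : Type*} [NormedAddCommGroup E] [NormedSpace ℝ E]
    (ψ : E → EReal) (x : E) (p : E →L[ℝ] ℝ) : EReal :=
  ψ x + fconj ψ p - ((p x : ℝ) : EReal)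

/-- Subdifferential: `∂ψ(x) = {x* : B_ψ(x, x*) = 0}`. -/
def subdiff {E : Type*} [NormedAddCommGroup E] [NormedSpace ℝ E]
    (ψ : E → EReal) (x : E) : Set (E →L[ℝ] ℝ) :=
  {p | breg ψ x p = 0}

/-! The conjugate `ψ*` is a supremum of affine functions of the dual variable, so `B_ψ(z, ·)` is
convex. With `w_t = a^ψ + (η_t / η_{t+1}) (v_{t+1} - a^ψ)`, the point `v_{t+1}` is the convex
combination `(η_{t+1} / η_t) w_t + (1 - η_{t+1} / η_t) a^ψ` (this is where `η_{t+1} ≤ η_t` enters),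
whence `B(z, v_{t+1}) / η_{t+1} ≤ B(z, w_t) / η_t + (1 / η_{t+1} - 1 / η_t) B(z, a^ψ)`.
So the `t`-th summand is at most `g_t - g_{t+1}` with `g_t = (B(z, v_t) - B(z, a^ψ)) / η_t`; the sum
telescopes to `g_1 - g_{T+1} = (B(z, a^ψ) - B(z, v_{T+1})) / η_{T+1}`, and `B(z, v_{T+1}) ≥ 0` by
Fenchel–Young. -/

theorem EReal.coe_finset_sum {ι : Type*} (s : Finset ι) (f : ι → ℝ) :
    ((∑ i ∈ s, f i : ℝ) : EReal) = ∑ i ∈ s, (f i : EReal) :=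
  map_sum (⟨⟨Real.toEReal, EReal.coe_zero⟩, EReal.coe_add⟩ : ℝ →+ EReal) f s

theorem lt_on_Icc_of_succ_le {α : Type*} [Preorder α] {η : ℕ → α} {a : α} {m n : ℕ}
    (hmono : ∀ t ∈ Icc m n, η (t + 1) ≤ η t) (hlt : a < η (n + 1)) :
    ∀ t ∈ Icc m (n + 1), a < η t := by
  have hanti : AntitoneOn η (Set.Icc m (n + 1)) :=
    antitoneOn_of_add_one_le Set.ordConnected_Icc fun t _ ht ht' =>
      hmono t (by simp only [Set.mem_Icc, mem_Icc] at *; omega)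
  intro t ht
  rw [mem_Icc] at ht
  exact hlt.trans_le (hanti ht ⟨by omega, le_rfl⟩ ht.2)

theorem sum_Icc_inv_mul_sub_le {η b c : ℕ → ℝ} {β : ℝ} {T : ℕ}
    (hη : ∀ t ∈ Icc 1 (T + 1), 0 < η t) (hb₁ : b 1 = β) (hb : 0 ≤ b (T + 1))
    (hstep : ∀ t ∈ Icc 1 T, b (t + 1) ≤ η (t + 1) / η t * c t + (1 - η (t + 1) / η t) * β) :
    ∑ t ∈ Icc 1 T, 1 / η t * (b t - c t) ≤ 1 / η (T + 1) * β := by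
  set g : ℕ → ℝ := fun t => (b t - β) / η t
  have hterm : ∀ t ∈ Icc 1 T, 1 / η t * (b t - c t) ≤ -(g (t + 1) - g t) := by
    intro t ht
    rw [mem_Icc] at ht
    have h₀ := hη t (mem_Icc.2 ⟨ht.1, by omega⟩)
    have h₁ := hη (t + 1) (mem_Icc.2 ⟨by omega, by omega⟩)
    have key : η t * b (t + 1) ≤ η (t + 1) * c t + (η t - η (t + 1)) * β :=
      calc η t * b (t + 1)
          ≤ η t * (η (t + 1) / η t * c t + (1 - η (t + 1) / η t) * β) :=
            mul_le_mul_of_nonneg_left (hstep t (mem_Icc.2 ht)) h₀.le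
        _ = η (t + 1) * c t + (η t - η (t + 1)) * β := by field_simp
    simp only [g]
    field_simp
    linarith
  calc ∑ t ∈ Icc 1 T, 1 / η t * (b t - c t)
      ≤ ∑ t ∈ Icc 1 T, -(g (t + 1) - g t) := sum_le_sum hterm
    _ = g 1 - g (T + 1) := by
      rw [sum_neg_distrib, ← Ico_add_one_right_eq_Icc, sum_Ico_sub g (by omega), neg_sub]
    _ ≤ 1 / η (T + 1) * β := by
      have := hη (T + 1) (mem_Icc.2 ⟨by omega, le_rfl⟩)
      simp only [g, hb₁, sub_self, zero_div, zero_sub]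
      rw [← neg_div, neg_sub, one_div_mul_eq_div]
      exact div_le_div_of_nonneg_right (by linarith) this.le

theorem EReal.sum_Icc_inv_mul_sub_le {η : ℕ → ℝ} {b c : ℕ → EReal} {β : EReal} {T : ℕ}
    (hη : ∀ t ∈ Icc 1 (T + 1), 0 < η t) (hb : ∀ t ∈ Icc 1 (T + 1), 0 ≤ b t)
    (hc : ∀ t ∈ Icc 1 T, c t ≠ ⊥ ∧ c t ≠ ⊤) (hβ : β ≠ ⊤) (hb₁ : b 1 = β)
    (hstep : ∀ t ∈ Icc 1 T, b (t + 1) ≤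
      ((η (t + 1) / η t : ℝ) : EReal) * c t + ((1 - η (t + 1) / η t : ℝ) : EReal) * β) :
    ∑ t ∈ Icc 1 T, ((1 / η t : ℝ) : EReal) * (b t - c t) ≤ ((1 / η (T + 1) : ℝ) : EReal) * β := by
  have hb_ne_bot : ∀ t ∈ Icc 1 (T + 1), b t ≠ ⊥ := fun t ht =>
    ne_bot_of_le_ne_bot EReal.zero_ne_bot (hb t ht)
  obtain ⟨β, rfl⟩ : ∃ r : ℝ, β = r :=
    ⟨_, (EReal.coe_toReal hβ (hb₁ ▸ hb_ne_bot 1 (by simp))).symm⟩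
  have hc' : ∀ t ∈ Icc 1 T, ((c t).toReal : EReal) = c t := fun t ht =>
    EReal.coe_toReal (hc t ht).2 (hc t ht).1
  have hstep' : ∀ t ∈ Icc 1 T,
      b (t + 1) ≤ ((η (t + 1) / η t * (c t).toReal + (1 - η (t + 1) / η t) * β : ℝ) : EReal) := by
    intro t ht
    rw [EReal.coe_add, EReal.coe_mul, EReal.coe_mul, hc' t ht]
    exact hstep t ht
  -- the step bounds propagate finiteness from `b 1 = β` to all of `b`
  have hb' : ∀ t ∈ Icc 1 (T + 1), ((b t).toReal : EReal) = b t := by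
    intro t ht
    refine EReal.coe_toReal ?_ (hb_ne_bot t ht)
    rcases t with _ | _ | t
    · simp at ht
    · simp [hb₁]
    · exact ne_top_of_le_ne_top (EReal.coe_ne_top _)
        (hstep' (t + 1) (by simp only [mem_Icc] at ht ⊢; omega))
  have hreal := _root_.sum_Icc_inv_mul_sub_le hη (b := fun t => (b t).toReal)
    (c := fun t => (c t).toReal) (β := β) (by simp [hb₁]) (EReal.toReal_nonneg (hb _ (by simp)))
    (fun t ht => by
      have := hstep' t ht
      rwa [← hb' (t + 1) (by simp only [mem_Icc] at ht ⊢; omega), EReal.coe_le_coe_iff] at this)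
  calc ∑ t ∈ Icc 1 T, ((1 / η t : ℝ) : EReal) * (b t - c t)
      = ((∑ t ∈ Icc 1 T, 1 / η t * ((b t).toReal - (c t).toReal) : ℝ) : EReal) := by
        rw [EReal.coe_finset_sum]
        refine sum_congr rfl fun t ht => ?_
        rw [EReal.coe_mul, EReal.coe_sub, hc' t ht,
          hb' t (Icc_subset_Icc_right (Nat.le_succ T) ht)]
    _ ≤ ((1 / η (T + 1) * β : ℝ) : EReal) := EReal.coe_le_coe_iff.2 hreal
    _ = ((1 / η (T + 1) : ℝ) : EReal) * β := EReal.coe_mul _ _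

theorem inv_smul_add_smul_sub_add_one_sub_inv_smul {K V : Type*} [Field K] [AddCommGroup V]
    [Module K V] {μ : K} (hμ : μ ≠ 0) (a x : V) : μ⁻¹ • (a + μ • (x - a)) + (1 - μ⁻¹) • a = x := by
  rw [smul_add, smul_smul, inv_mul_cancel₀ hμ, one_smul, sub_smul, one_smul]
  abel

section Bregman

variable {E : Type*} [NormedAddCommGroup E] [NormedSpace ℝ E] {ψ : E → EReal}

theorem coe_sub_le_fconj (p : E →L[ℝ] ℝ) (x : E) : ((p x : ℝ) : EReal) - ψ x ≤ fconj ψ p :=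
  le_iSup (fun x => ((p x : ℝ) : EReal) - ψ x) x

theorem fconj_smul_add_le {p q : E →L[ℝ] ℝ} {P Q l : ℝ} (hl₀ : 0 ≤ l) (hl₁ : l ≤ 1)
    (hp : fconj ψ p ≤ P) (hq : fconj ψ q ≤ Q) :
    fconj ψ (l • p + (1 - l) • q) ≤ ((l * P + (1 - l) * Q : ℝ) : EReal) := by
  refine iSup_le fun x => ?_
  have hpx := (coe_sub_le_fconj p x).trans hp
  have hqx := (coe_sub_le_fconj q x).trans hq
  generalize ψ x = y at hpx hqx ⊢
  induction y using EReal.rec with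
  | bot => simp at hpx
  | top => simp
  | coe y =>
    norm_cast at hpx hqx ⊢
    simp only [add_apply, smul_apply, smul_eq_mul]
    nlinarith [mul_le_mul_of_nonneg_left hpx hl₀, mul_le_mul_of_nonneg_left hqx (sub_nonneg.2 hl₁)]

variable {z : E} {s : ℝ}

theorem breg_le_coe_iff (hz : ψ z = s) {p : E →L[ℝ] ℝ} {R : ℝ} :
    breg ψ z p ≤ R ↔ fconj ψ p ≤ ((R - s + p z : ℝ) : EReal) := by
  rw [breg, hz]
  induction fconj ψ p using EReal.rec with
  | bot => simp
  | top =>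
    rw [EReal.coe_add_top, EReal.top_sub_coe]
    exact iff_of_false (by simp) (EReal.coe_lt_top _).not_ge
  | coe F =>
    norm_cast
    constructor <;> intro <;> linarith

theorem breg_nonneg (hz : ψ z = s) (p : E →L[ℝ] ℝ) : 0 ≤ breg ψ z p := by
  have h := coe_sub_le_fconj (ψ := ψ) p z
  rw [hz, ← EReal.coe_sub] at h
  rw [breg, hz]
  generalize fconj ψ p = F at h ⊢
  induction F using EReal.rec with
  | bot => exact absurd h (EReal.bot_lt_coe _).not_ge
  | top => simp
  | coe F =>
    norm_cast at h ⊢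
    linarith

theorem breg_ne_top (hz : ψ z = s) {p : E →L[ℝ] ℝ} (hp : fconj ψ p ≠ ⊤) : breg ψ z p ≠ ⊤ := by
  rw [breg, hz]
  generalize fconj ψ p = F at hp ⊢
  induction F using EReal.rec with
  | bot => simp
  | top => simp at hp
  | coe F => norm_cast; exact EReal.coe_ne_top _

theorem exists_breg_eq_coe (hz : ψ z = s) {p : E →L[ℝ] ℝ} (hp : breg ψ z p ≠ ⊤) :
    ∃ P : ℝ, breg ψ z p = P :=
  ⟨_, (EReal.coe_toReal hp (ne_bot_of_le_ne_bot EReal.zero_ne_bot (breg_nonneg hz p))).symm⟩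

theorem breg_smul_add_le (hz : ψ z = s) {p q : E →L[ℝ] ℝ} {l : ℝ} (hl₀ : 0 ≤ l) (hl₁ : l ≤ 1)
    (hp : breg ψ z p ≠ ⊤) (hq : breg ψ z q ≠ ⊤) :
    breg ψ z (l • p + (1 - l) • q) ≤
      (l : EReal) * breg ψ z p + ((1 - l : ℝ) : EReal) * breg ψ z q := by
  obtain ⟨P, hP⟩ := exists_breg_eq_coe hz hp
  obtain ⟨Q, hQ⟩ := exists_breg_eq_coe hz hq
  rw [hP, hQ, ← EReal.coe_mul, ← EReal.coe_mul, ← EReal.coe_add, breg_le_coe_iff hz]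
  refine (fconj_smul_add_le hl₀ hl₁ ((breg_le_coe_iff hz).1 hP.le)
    ((breg_le_coe_iff hz).1 hQ.le)).trans_eq ?_
  simp only [add_apply, smul_apply, smul_eq_mul]
  ring_nf

end Bregman

theorem telescoping_nonincreasing_eta_general
    {E : Type*} [NormedAddCommGroup E] [NormedSpace ℝ E]
    (ψ : E → EReal) (hbot : ∀ x, ψ x ≠ ⊥)
    (apsi : E →L[ℝ] ℝ)
    (T : ℕ) (hT : 1 ≤ T)
    (η : ℕ → ℝ) (hηpos : 0 < η (T + 1))
    (hηmono : ∀ t ∈ Icc 1 T, η (t + 1) ≤ η t)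
    (v : ℕ → E →L[ℝ] ℝ) (hv1 : v 1 = apsi)
    (z : E) (hz : ψ z < ⊤)
    (hfin : ∀ t ∈ Icc 1 T, fconj ψ (v t) < ⊤ ∧
      fconj ψ (apsi + (η t / η (t + 1)) • (v (t + 1) - apsi)) < ⊤) :
    ∑ t ∈ Icc 1 T, ((1 / η t : ℝ) : EReal) *
        (breg ψ z (v t) -
         breg ψ z (apsi + (η t / η (t + 1)) • (v (t + 1) - apsi)))
      ≤ ((1 / η (T + 1) : ℝ) : EReal) * breg ψ z apsi := by
  obtain ⟨s, hs⟩ : ∃ s : ℝ, ψ z = s := ⟨_, (EReal.coe_toReal hz.ne (hbot z)).symm⟩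
  have hη := lt_on_Icc_of_succ_le hηmono hηpos
  have hw : ∀ t ∈ Icc 1 T,
      breg ψ z (apsi + (η t / η (t + 1)) • (v (t + 1) - apsi)) ≠ ⊤ := fun t ht =>
    breg_ne_top hs (hfin t ht).2.ne
  have hapsi : breg ψ z apsi ≠ ⊤ := hv1 ▸ breg_ne_top hs (hfin 1 (mem_Icc.2 ⟨le_rfl, hT⟩)).1.ne
  refine EReal.sum_Icc_inv_mul_sub_le hη (fun t _ => breg_nonneg hs _)
    (fun t ht => ⟨ne_bot_of_le_ne_bot EReal.zero_ne_bot (breg_nonneg hs _), hw t ht⟩) hapsi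
    (by rw [hv1]) fun t ht => ?_
  have h₀ := hη t (Icc_subset_Icc_right (Nat.le_succ T) ht)
  have h₁ := hη (t + 1) (by simp only [mem_Icc] at ht ⊢; omega)
  conv_lhs =>
    rw [← inv_smul_add_smul_sub_add_one_sub_inv_smul (div_pos h₀ h₁).ne' apsi (v (t + 1)), inv_div]
  exact breg_smul_add_le hs (div_pos h₁ h₀).le (div_le_one_of_le₀ (hηmono t ht) h₀.le)
    (hw t ht) hapsi

/-- **Telescoping lemma for nonincreasing cumulative parameters.** -/
theorem telescoping_nonincreasing_eta
    {E : Type*} [NormedAddCommGroup E] [NormedSpace ℝ E]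
    (ψ : E → EReal) (hbot : ∀ x, ψ x ≠ ⊥) (hproper : ∃ x, ψ x ≠ ⊤)
    (hconv : ∀ x y : E, ∀ a b : ℝ, 0 ≤ a → 0 ≤ b → a + b = 1 →
      ψ (a • x + b • y) ≤ (a : EReal) * ψ x + (b : EReal) * ψ y)
    (hlsc : LowerSemicontinuous ψ)
    (a : E) (apsi : E →L[ℝ] ℝ) (ha : apsi ∈ subdiff ψ a)
    (T : ℕ) (hT : 1 ≤ T)
    (η : ℕ → ℝ) (hηpos : 0 < η (T + 1))
    (hηmono : ∀ t ∈ Icc 1 T, η (t + 1) ≤ η t)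
    (v : ℕ → E →L[ℝ] ℝ) (hv1 : v 1 = apsi)
    (z : E) (hz : ψ z < ⊤)
    (hfin : ∀ t ∈ Icc 1 T, fconj ψ (v t) < ⊤ ∧
      fconj ψ (apsi + (η t / η (t + 1)) • (v (t + 1) - apsi)) < ⊤) :
    ∑ t ∈ Icc 1 T, ((1 / η t : ℝ) : EReal) *
        (breg ψ z (v t) -
         breg ψ z (apsi + (η t / η (t + 1)) • (v (t + 1) - apsi)))
      ≤ ((1 / η (T + 1) : ℝ) : EReal) * breg ψ z apsi :=
  telescoping_nonincreasing_eta_general ψ hbot apsi T hT η hηpos hηmono v hv1 z hz hfin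
end

section
/- Telescoping lemma for nondecreasing instantaneous parameters: Let E be a real normed vector space, ψ: E → ℝ ∪ {+∞} proper, convex, lower semicontinuous, a ∈ E and a^ψ ∈ ∂ψ(a). Let T ≥ 1, 0 < θ_1 ≤ θ_2 ≤ … ≤ θ_T, and v_1,…,v_{T+1} ∈ E* with v_1 = a^ψ and ψ*(v_t) < +∞ for all t ≤ T+1. Let z_1,…,z_T ∈ dom ψ, and for each t = 2,…,T choose any subgradient z_t^ψ ∈ ∂ψ(z_t). Then Σ_{t=1}^T (1/θ_t)[B_ψ(z_t, v_t) − B_ψ(z_t, v_{t+1})] ≤ (1/θ_1) B_ψ(z_1, a^ψ) + Σ_{t=2}^T (1/θ_t) ‖z_t^ψ − v_t‖ · ‖z_t − z_{t−1}‖. -/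
open Finset

lemma le_fconj {E : Type*} [NormedAddCommGroup E] [NormedSpace ℝ E]
    (ψ : E → EReal) (p : E →L[ℝ] ℝ) (x : E) :
    ((p x : ℝ) : EReal) - ψ x ≤ fconj ψ p :=
  le_iSup (fun x => ((p x : ℝ) : EReal) - ψ x) x

lemma fconj_ne_bot {E : Type*} [NormedAddCommGroup E] [NormedSpace ℝ E]
    (ψ : E → EReal) (hbot : ∀ x, ψ x ≠ ⊥) (hproper : ∃ x, ψ x ≠ ⊤)
    (p : E →L[ℝ] ℝ) : fconj ψ p ≠ ⊥ := by
  obtain ⟨x₀, hx₀⟩ := hproper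
  have h := le_fconj ψ p x₀
  rw [← EReal.coe_toReal hx₀ (hbot x₀), ← EReal.coe_sub] at h
  intro hb
  rw [hb, le_bot_iff] at h
  exact EReal.coe_ne_bot _ h

lemma ereal_coe_sum (s : Finset ℕ) (f : ℕ → ℝ) :
    ((∑ i ∈ s, f i : ℝ) : EReal) = ∑ i ∈ s, ((f i : ℝ) : EReal) := by
  induction s using Finset.cons_induction with
  | empty => simp
  | cons a s ha ih => rw [Finset.sum_cons, Finset.sum_cons, EReal.coe_add, ih]

lemma aux_key (θ : ℕ → ℝ) (B : ℕ → ℕ → ℝ) (C : ℕ → ℝ) :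
    ∀ T : ℕ, 1 ≤ T →
    (∀ t, 1 ≤ t → t ≤ T → 0 < θ t) →
    (∀ s t, 1 ≤ s → s ≤ t → t ≤ T → θ s ≤ θ t) →
    (∀ t, 1 ≤ t → t ≤ T → 0 ≤ B t (t + 1)) →
    (∀ t, 2 ≤ t → t ≤ T → B t t - B (t - 1) t ≤ C t) →
    ∑ t ∈ Icc 1 T, (1 / θ t) * (B t t - B t (t + 1))
      ≤ (1 / θ 1) * B 1 1 - (1 / θ T) * B T (T + 1)
        + ∑ t ∈ Icc 2 T, (1 / θ t) * C t := by
  intro T hT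
  induction T, hT using Nat.le_induction with
  | base =>
    intro _ _ _ _
    simp only [show Icc 1 1 = {1} from rfl, Icc_self]
    norm_num
    ring_nf
    exact le_rfl
  | succ n hn ih =>
    intro hpos hmono hB0 hstep
    have ih' := ih (fun t h1 h2 => hpos t h1 (h2.trans (Nat.le_succ n)))
      (fun s t h1 h2 h3 => hmono s t h1 h2 (h3.trans (Nat.le_succ n)))
      (fun t h1 h2 => hB0 t h1 (h2.trans (Nat.le_succ n)))
      (fun t h1 h2 => hstep t h1 (h2.trans (Nat.le_succ n)))
    rw [Finset.sum_Icc_succ_top (by omega : 1 ≤ n + 1),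
        Finset.sum_Icc_succ_top (by omega : 2 ≤ n + 1)]
    have hstep' : B (n+1) (n+1) - B n (n+1) ≤ C (n+1) := by
      have := hstep (n+1) (by omega) le_rfl
      simpa using this
    have hBn : 0 ≤ B n (n+1) := hB0 n hn (Nat.le_succ n)
    have hpn : 0 < θ n := hpos n hn (Nat.le_succ n)
    have hpn1 : 0 < θ (n+1) := hpos (n+1) (by omega) le_rfl
    have hmn : θ n ≤ θ (n+1) := hmono n (n+1) hn (Nat.le_succ n) le_rfl
    have hinv : 1 / θ (n+1) ≤ 1 / θ n := one_div_le_one_div_of_le hpn hmn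
    have hinvpos : 0 < 1 / θ (n+1) := by positivity
    have key : (1 / θ (n+1)) * B (n+1) (n+1) - (1 / θ n) * B n (n+1)
        ≤ (1 / θ (n+1)) * C (n+1) := by
      nlinarith [mul_le_mul_of_nonneg_left hstep' hinvpos.le,
        mul_le_mul_of_nonneg_right hinv hBn]
    linarith

/-- **Telescoping lemma for nondecreasing instantaneous parameters.** -/
theorem telescoping_nondecreasing_theta
    {E : Type*} [NormedAddCommGroup E] [NormedSpace ℝ E]
    (ψ : E → EReal) (hbot : ∀ x, ψ x ≠ ⊥) (hproper : ∃ x, ψ x ≠ ⊤)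
    (hconv : ∀ x y : E, ∀ a b : ℝ, 0 ≤ a → 0 ≤ b → a + b = 1 →
      ψ (a • x + b • y) ≤ (a : EReal) * ψ x + (b : EReal) * ψ y)
    (hlsc : LowerSemicontinuous ψ)
    (a : E) (apsi : E →L[ℝ] ℝ) (ha : apsi ∈ subdiff ψ a)
    (T : ℕ) (hT : 1 ≤ T)
    (θ : ℕ → ℝ) (hθpos : 0 < θ 1)
    (hθmono : ∀ s t : ℕ, 1 ≤ s → s ≤ t → t ≤ T → θ s ≤ θ t)
    (v : ℕ → E →L[ℝ] ℝ) (hv1 : v 1 = apsi)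
    (hfin : ∀ t ∈ Icc 1 (T + 1), fconj ψ (v t) < ⊤)
    (z : ℕ → E) (hz : ∀ t ∈ Icc 1 T, ψ (z t) < ⊤)
    (zpsi : ℕ → E →L[ℝ] ℝ)
    (hzpsi : ∀ t ∈ Icc 2 T, zpsi t ∈ subdiff ψ (z t)) :
    ∑ t ∈ Icc 1 T, ((1 / θ t : ℝ) : EReal) *
        (breg ψ (z t) (v t) - breg ψ (z t) (v (t + 1)))
      ≤ ((1 / θ 1 : ℝ) : EReal) * breg ψ (z 1) apsi
        + ((∑ t ∈ Icc 2 T, (1 / θ t) * (‖zpsi t - v t‖ * ‖z t - z (t - 1)‖) : ℝ) : EReal) := by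
  set r : ℕ → ℝ := fun t => (ψ (z t)).toReal with hr
  set g : ℕ → ℝ := fun s => (fconj ψ (v s)).toReal with hg
  set B : ℕ → ℕ → ℝ := fun t s => r t + g s - (v s) (z t) with hB
  set C : ℕ → ℝ := fun t => ‖zpsi t - v t‖ * ‖z t - z (t - 1)‖ with hC
  -- finiteness
  have hψeq : ∀ t, 1 ≤ t → t ≤ T → ψ (z t) = ((r t : ℝ) : EReal) := fun t h1 h2 =>
    (EReal.coe_toReal (hz t (mem_Icc.mpr ⟨h1, h2⟩)).ne (hbot _)).symm
  have hgeq : ∀ s, 1 ≤ s → s ≤ T + 1 → fconj ψ (v s) = ((g s : ℝ) : EReal) := fun s h1 h2 =>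
    (EReal.coe_toReal (hfin s (mem_Icc.mpr ⟨h1, h2⟩)).ne
      (fconj_ne_bot ψ hbot hproper _)).symm
  have hbreg : ∀ t s, 1 ≤ t → t ≤ T → 1 ≤ s → s ≤ T + 1 →
      breg ψ (z t) (v s) = ((B t s : ℝ) : EReal) := by
    intro t s h1 h2 h3 h4
    rw [breg, hψeq t h1 h2, hgeq s h3 h4, ← EReal.coe_add, ← EReal.coe_sub]
  -- Fenchel-Young: nonnegativity of B
  have hB0 : ∀ t s, 1 ≤ t → t ≤ T → 1 ≤ s → s ≤ T + 1 → 0 ≤ B t s := by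
    intro t s h1 h2 h3 h4
    have h := le_fconj ψ (v s) (z t)
    rw [hψeq t h1 h2, hgeq s h3 h4, ← EReal.coe_sub, EReal.coe_le_coe_iff] at h
    simp only [hB]
    linarith
  have hpos : ∀ t, 1 ≤ t → t ≤ T → 0 < θ t := fun t h1 h2 =>
    lt_of_lt_of_le hθpos (hθmono 1 t le_rfl h1 h2)
  -- step estimate
  have hstep : ∀ t, 2 ≤ t → t ≤ T → B t t - B (t - 1) t ≤ C t := by
    intro t h2 hTt
    have h1t : 1 ≤ t := by omega
    have h1t' : 1 ≤ t - 1 := by omega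
    have hTt' : t - 1 ≤ T := by omega
    have hsub := hzpsi t (mem_Icc.mpr ⟨h2, hTt⟩)
    have heq : breg ψ (z t) (zpsi t) = 0 := hsub
    rw [breg, hψeq t h1t hTt] at heq
    have hne : fconj ψ (zpsi t) ≠ ⊤ := by
      intro htop
      rw [htop] at heq
      simp only [EReal.add_top_of_ne_bot (EReal.coe_ne_bot _), EReal.top_sub_coe] at heq
      exact (by simp : (⊤ : EReal) ≠ 0) heq
    have hzq : fconj ψ (zpsi t) = (((fconj ψ (zpsi t)).toReal : ℝ) : EReal) :=
      (EReal.coe_toReal hne (fconj_ne_bot ψ hbot hproper _)).symm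
    set q : ℝ := (fconj ψ (zpsi t)).toReal
    rw [hzq, ← EReal.coe_add, ← EReal.coe_sub] at heq
    have heqr : r t + q - (zpsi t) (z t) = 0 := by exact_mod_cast heq
    have hFY := le_fconj ψ (zpsi t) (z (t - 1))
    rw [hψeq (t-1) h1t' hTt', hzq, ← EReal.coe_sub, EReal.coe_le_coe_iff] at hFY
    -- r t - r (t-1) ≤ zpsi t (z t) - zpsi t (z (t-1))
    have hgrad : r t - r (t - 1) ≤ (zpsi t) (z t) - (zpsi t) (z (t - 1)) := by linarith
    have hdual : (zpsi t - v t) (z t - z (t - 1)) ≤ ‖zpsi t - v t‖ * ‖z t - z (t - 1)‖ := by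
      refine le_trans (le_abs_self _) ?_
      rw [← Real.norm_eq_abs]
      exact (zpsi t - v t).le_opNorm _
    simp only [ContinuousLinearMap.sub_apply, map_sub] at hdual
    simp only [hB, hC]
    linarith
  -- put everything together
  have hmain := aux_key θ B C T hT hpos hθmono
    (fun t h1 h2 => hB0 t (t+1) h1 h2 (by omega) (by omega)) hstep
  have hLHS : ∑ t ∈ Icc 1 T, ((1 / θ t : ℝ) : EReal) *
      (breg ψ (z t) (v t) - breg ψ (z t) (v (t + 1)))
      = ((∑ t ∈ Icc 1 T, (1 / θ t) * (B t t - B t (t + 1)) : ℝ) : EReal) := by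
    rw [ereal_coe_sum]
    refine Finset.sum_congr rfl fun t ht => ?_
    obtain ⟨h1, h2⟩ := mem_Icc.mp ht
    rw [hbreg t t h1 h2 h1 (by omega), hbreg t (t+1) h1 h2 (by omega) (by omega),
      ← EReal.coe_sub, ← EReal.coe_mul]
  have hb1 : breg ψ (z 1) apsi = ((B 1 1 : ℝ) : EReal) := by
    rw [← hv1]; exact hbreg 1 1 le_rfl hT le_rfl (by omega)
  rw [hLHS, hb1, ← EReal.coe_mul, ← EReal.coe_add, EReal.coe_le_coe_iff]
  have hBT : 0 ≤ B T (T + 1) := hB0 T (T+1) hT le_rfl (by omega) (by omega)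
  have hθT : 0 < θ T := hpos T hT le_rfl
  have : 0 ≤ (1 / θ T) * B T (T + 1) := by positivity
  calc ∑ t ∈ Icc 1 T, (1 / θ t) * (B t t - B t (t + 1))
      ≤ (1 / θ 1) * B 1 1 - (1 / θ T) * B T (T + 1) + ∑ t ∈ Icc 2 T, (1 / θ t) * C t := hmain
    _ ≤ (1 / θ 1) * B 1 1 + ∑ t ∈ Icc 2 T, (1 / θ t) * C t := by linarith
end

section
/- Evaluation of the auxiliary penalty Φ: Let E* be a real normed vector space, ρ ∈ (0, +∞], ξ > 0, and x*, x̂* ∈ E*. Set λ = min{‖x*‖/‖x* − x̂*‖, 1} if x* ≠ x̂* and λ = 1 otherwise, and let ŷ* = λ x̂* + (1 − λ) x*. Define Φ = Q_ρ*(ξ‖x* − ŷ*‖) + inf_{γ>0} (1/γ)(Q_ρ*(γξ‖x*‖) + Q_ρ*(ξ‖x̂* − ŷ*‖)). Then Φ = Q_ρ*(ξ · min{‖x* − x̂*‖, ‖x*‖}) + ξ‖x*‖ · min{ξ(‖x* − x̂*‖ − ‖x*‖)₊, ρ}, and moreover Φ ≤ ξ² Q_{‖x*‖}*(‖x* − x̂*‖)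 − (1/2)(ξ · min{‖x* − x̂*‖, ‖x*‖} − ρ)₊². -/
/-!
Along the segment from `x*` to `x̂*`, the point `ŷ*` lies at distance `min{d, ‖x*‖}` from `x*`
(`d = ‖x* − x̂*‖`), so `‖x* − ŷ*‖ = min{d, ‖x*‖}` and `‖x̂* − ŷ*‖ = (d − ‖x*‖)₊`.
On `[0, ∞)` one has `Q_ρ*(u) = sup_{0 ≤ M ≤ ρ} (u M − M²/2) = u m − m²/2` with `m = min{u, ρ}`.
The Fenchel–Young bound at `M = min{b, ρ}` shows that the perspective
`γ⁻¹ (Q_ρ*(γ a) + Q_ρ*(b))` is at least `a · min{b, ρ}`, and letting `γ` tend to `b / a`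
(if `b ≤ ρ`) or to `∞` (if `b > ρ`) shows that this is its infimum. The inequality then
follows from `min{b, ρ} ≤ b` and `ξ² Q_{‖x*‖}*(d) = (ξ min{d, ‖x*‖})²/2 + ξ‖x*‖ · ξ (d − ‖x*‖)₊`.
-/

open scoped ENNReal

/-- `Q_r*(κ) = κ²/2 − (|κ| − r)₊²/2` for `r ∈ [0, +∞]` (with `(|κ| − ∞)₊ = 0`). -/
noncomputable def Qstar (r : ℝ≥0∞) (κ : ℝ) : ℝ :=
  κ ^ 2 / 2 - ((ENNReal.ofReal |κ| - r).toReal) ^ 2 / 2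

open Filter Topology in
lemma le_of_forall_pos_le_add_mul {x c K : ℝ} (h : ∀ t > 0, x ≤ c + t * K) : x ≤ c := by
  have hcont : Continuous fun t : ℝ => c + t * K := by fun_prop
  have hlim : Tendsto (fun t => c + t * K) (𝓝[>] 0) (𝓝 c) := by
    simpa using (hcont.tendsto 0).mono_left nhdsWithin_le_nhds
  exact ge_of_tendsto hlim (eventually_nhdsWithin_of_forall h)

lemma ENNReal.toReal_ofReal_sub_add_toReal_min (ρ : ℝ≥0∞) {u : ℝ} (hu : 0 ≤ u) :
    (ENNReal.ofReal u - ρ).toReal + (min (ENNReal.ofReal u) ρ).toReal = u := by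
  rw [← ENNReal.toReal_add (by simp) (by simp), tsub_add_min, ENNReal.toReal_ofReal hu]

lemma Qstar_eq_mul_sub {ρ : ℝ≥0∞} {u : ℝ} (hu : 0 ≤ u) :
    Qstar ρ u = u * (min (ENNReal.ofReal u) ρ).toReal
      - (min (ENNReal.ofReal u) ρ).toReal ^ 2 / 2 := by
  have h := ENNReal.toReal_ofReal_sub_add_toReal_min ρ hu
  rw [Qstar, abs_of_nonneg hu]
  set m := (min (ENNReal.ofReal u) ρ).toReal
  set s := (ENNReal.ofReal u - ρ).toReal
  linear_combination (-(u - m + s) / 2) * h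

lemma Qstar_le_half_sq (ρ : ℝ≥0∞) (κ : ℝ) : Qstar ρ κ ≤ κ ^ 2 / 2 :=
  sub_le_self _ (by positivity)

lemma mul_sub_le_Qstar {ρ : ℝ≥0∞} {M u : ℝ} (hMρ : ENNReal.ofReal M ≤ ρ)
    (hu : 0 ≤ u) : u * M - M ^ 2 / 2 ≤ Qstar ρ u := by
  rw [Qstar_eq_mul_sub hu]
  set m := (min (ENNReal.ofReal u) ρ).toReal
  have hmu : m ≤ u := ENNReal.toReal_le_of_le_ofReal hu (min_le_left _ _)
  rcases le_total M u with hMu | huM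
  · have hMm : M ≤ m := by
      rw [← ENNReal.ofReal_le_iff_le_toReal (by simp)]
      exact le_min (ENNReal.ofReal_le_ofReal hMu) hMρ
    nlinarith
  · have hm : m = u := by
      simp only [m]
      rw [min_eq_left ((ENNReal.ofReal_le_ofReal huM).trans hMρ), ENNReal.toReal_ofReal hu]
    rw [hm]
    nlinarith

lemma Qstar_le_mul_toReal {ρ : ℝ≥0∞} (hρ : ρ ≠ ⊤) {u : ℝ} (hu : 0 ≤ u) :
    Qstar ρ u ≤ u * ρ.toReal := by
  have hm : (min (ENNReal.ofReal u) ρ).toReal ≤ ρ.toReal :=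
    ENNReal.toReal_mono hρ (min_le_right _ _)
  rw [Qstar_eq_mul_sub hu]
  nlinarith [ENNReal.toReal_nonneg (a := min (ENNReal.ofReal u) ρ)]

lemma Qstar_ofReal {r u : ℝ} (hr : 0 ≤ r) (hu : 0 ≤ u) :
    Qstar (ENNReal.ofReal r) u = min u r ^ 2 / 2 + r * max (u - r) 0 := by
  rw [Qstar_eq_mul_sub hu, ← ENNReal.ofReal_min, ENNReal.toReal_ofReal (le_min hu hr)]
  rcases le_total u r with h | h
  · rw [min_eq_left h, max_eq_right (by linarith)]; ring
  · rw [min_eq_right h, max_eq_left (by linarith)]; ring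

theorem iInf_perspective_Qstar (ρ : ℝ≥0∞) {a b : ℝ} (ha : 0 ≤ a) (hb : 0 ≤ b) :
    ⨅ γ : {γ : ℝ // 0 < γ}, (1 / γ.1) * (Qstar ρ (γ.1 * a) + Qstar ρ b) =
      a * (min (ENNReal.ofReal b) ρ).toReal := by
  set M := (min (ENNReal.ofReal b) ρ).toReal
  have hMb : M ≤ b := ENNReal.toReal_le_of_le_ofReal hb (min_le_left _ _)
  have hMρ : ENNReal.ofReal M ≤ ρ := ENNReal.ofReal_toReal_le.trans (min_le_right _ _)
  have lower : ∀ γ : {γ : ℝ // 0 < γ},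
      a * M ≤ (1 / γ.1) * (Qstar ρ (γ.1 * a) + Qstar ρ b) := by
    rintro ⟨γ, hγ⟩
    have hγa := mul_sub_le_Qstar hMρ (mul_nonneg hγ.le ha)
    have hQb := mul_sub_le_Qstar hMρ hb
    have hM0 : 0 ≤ M * (b - M) := mul_nonneg ENNReal.toReal_nonneg (sub_nonneg.2 hMb)
    dsimp only
    rw [one_div_mul_eq_div, le_div_iff₀ hγ]
    linarith
  refine le_antisymm ?_ (le_ciInf lower)
  have upper : ∀ γ (hγ : 0 < γ), ⨅ γ : {γ : ℝ // 0 < γ},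
      (1 / γ.1) * (Qstar ρ (γ.1 * a) + Qstar ρ b) ≤ (1 / γ) * (Qstar ρ (γ * a) + Qstar ρ b) :=
    fun γ hγ => ciInf_le ⟨a * M, Set.forall_mem_range.2 lower⟩ ⟨γ, hγ⟩
  rcases le_or_gt (ENNReal.ofReal b) ρ with hbρ | hρb
  · -- `γ = (b + t)/(a + t)` approaches the minimiser `b / a` of `γ a²/2 + b²/(2γ)`
    have hM : M = b := by simp [M, min_eq_left hbρ, hb]
    refine le_of_forall_pos_le_add_mul (K := (a + b) / 2) fun t ht => ?_
    have hγ : 0 < (b + t) / (a + t) := by positivity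
    refine (upper _ hγ).trans ?_
    calc 1 / ((b + t) / (a + t)) * (Qstar ρ ((b + t) / (a + t) * a) + Qstar ρ b)
        ≤ 1 / ((b + t) / (a + t)) * (((b + t) / (a + t) * a) ^ 2 / 2 + b ^ 2 / 2) := by
          gcongr <;> apply Qstar_le_half_sq
      _ ≤ a * M + t * ((a + b) / 2) := by
          have hat : 0 < a + t := by positivity
          have hbt : 0 < b + t := by positivity
          rw [hM]
          field_simp
          nlinarith [mul_nonneg ha hb, mul_nonneg (mul_nonneg ha hb) ht.le, mul_nonneg ha ht.le,
            mul_nonneg hb ht.le]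
  · have hρ : ρ ≠ ⊤ := hρb.ne_top
    have hM : M = ρ.toReal := by simp [M, min_eq_right hρb.le]
    refine le_of_forall_pos_le_add_mul (K := Qstar ρ b) fun t ht => ?_
    refine (upper t⁻¹ (inv_pos.2 ht)).trans ?_
    have h := Qstar_le_mul_toReal hρ (mul_nonneg (inv_pos.2 ht).le ha)
    rw [one_div, inv_inv, hM, mul_add]
    have : t * Qstar ρ (t⁻¹ * a) ≤ a * ρ.toReal := by
      calc t * Qstar ρ (t⁻¹ * a) ≤ t * (t⁻¹ * a * ρ.toReal) := by gcongr
        _ = a * ρ.toReal := by field_simp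
    linarith

section Segment

variable {F : Type*} [NormedAddCommGroup F] {x y : F} {lam : ℝ}

lemma mem_Icc_and_mul_norm_sub_eq_min
    (hlam : (x = y → lam = 1) ∧ (x ≠ y → lam = min (‖x‖ / ‖x - y‖) 1)) :
    lam ∈ Set.Icc 0 1 ∧ lam * ‖x - y‖ = min ‖x - y‖ ‖x‖ := by
  rcases eq_or_ne x y with rfl | hxy
  · simp [hlam.1 rfl]
  · have hd : 0 < ‖x - y‖ := norm_sub_pos_iff.2 hxy
    rw [hlam.2 hxy, min_mul_of_nonneg _ _ hd.le, div_mul_cancel₀ _ hd.ne', one_mul]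
    exact ⟨⟨by positivity, min_le_right _ _⟩, min_comm _ _⟩

variable [NormedSpace ℝ F]

lemma norm_sub_smul_add_smul_left
    (hlam : (x = y → lam = 1) ∧ (x ≠ y → lam = min (‖x‖ / ‖x - y‖) 1)) :
    ‖x - (lam • y + (1 - lam) • x)‖ = min ‖x - y‖ ‖x‖ := by
  obtain ⟨⟨hlam0, -⟩, hmul⟩ := mem_Icc_and_mul_norm_sub_eq_min hlam
  have : x - (lam • y + (1 - lam) • x) = lam • (x - y) := by module
  rw [this, norm_smul, Real.norm_of_nonneg hlam0, hmul]

lemma norm_sub_smul_add_smul_right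
    (hlam : (x = y → lam = 1) ∧ (x ≠ y → lam = min (‖x‖ / ‖x - y‖) 1)) :
    ‖y - (lam • y + (1 - lam) • x)‖ = max (‖x - y‖ - ‖x‖) 0 := by
  obtain ⟨⟨-, hlam1⟩, hmul⟩ := mem_Icc_and_mul_norm_sub_eq_min hlam
  have : y - (lam • y + (1 - lam) • x) = (1 - lam) • (y - x) := by module
  rw [this, norm_smul, Real.norm_of_nonneg (sub_nonneg.2 hlam1), norm_sub_rev, sub_mul, hmul,
    one_mul, ← max_sub_sub_left, sub_self, max_comm]

end Segment

theorem auxiliary_penalty_evaluation_general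
    {F : Type*} [NormedAddCommGroup F] [NormedSpace ℝ F]
    (ρ : ℝ≥0∞) (ξ : ℝ) (hξ : 0 < ξ)
    (xs xh : F)
    (lam : ℝ)
    (hlam : (xs = xh → lam = 1) ∧ (xs ≠ xh → lam = min (‖xs‖ / ‖xs - xh‖) 1))
    (yh : F) (hyh : yh = lam • xh + (1 - lam) • xs)
    (Phi : ℝ)
    (hPhi : Phi = Qstar ρ (ξ * ‖xs - yh‖) +
      ⨅ γ : {γ : ℝ // 0 < γ},
        (1 / γ.1) * (Qstar ρ (γ.1 * ξ * ‖xs‖) + Qstar ρ (ξ * ‖xh - yh‖))) :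
    Phi = Qstar ρ (ξ * min ‖xs - xh‖ ‖xs‖)
        + ξ * ‖xs‖ * (min (ENNReal.ofReal (ξ * max (‖xs - xh‖ - ‖xs‖) 0)) ρ).toReal
    ∧ Phi ≤ ξ ^ 2 * Qstar (ENNReal.ofReal ‖xs‖) ‖xs - xh‖
        - (1 / 2) * ((ENNReal.ofReal (ξ * min ‖xs - xh‖ ‖xs‖) - ρ).toReal) ^ 2 := by
  have hB : 0 ≤ ξ * max (‖xs - xh‖ - ‖xs‖) 0 := by positivity
  simp only [mul_assoc _ ξ] at hPhi
  rw [hyh, norm_sub_smul_add_smul_left hlam, norm_sub_smul_add_smul_right hlam,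
    iInf_perspective_Qstar ρ (by positivity) hB] at hPhi
  refine ⟨hPhi, ?_⟩
  have hM : (min (ENNReal.ofReal (ξ * max (‖xs - xh‖ - ‖xs‖) 0)) ρ).toReal
      ≤ ξ * max (‖xs - xh‖ - ‖xs‖) 0 :=
    ENNReal.toReal_le_of_le_ofReal hB (min_le_left _ _)
  have hξn : 0 ≤ ξ * ‖xs‖ := by positivity
  rw [hPhi, Qstar, abs_of_nonneg (by positivity), Qstar_ofReal (norm_nonneg _) (norm_nonneg _)]
  linarith [mul_le_mul_of_nonneg_left hM hξn]

/-- **Evaluation of the auxiliary penalty `Φ`.** With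
`λ = min{‖x*‖/‖x* − x̂*‖, 1}` (and `λ = 1` if `x* = x̂*`), `ŷ* = λ x̂* + (1 − λ) x*`, and
`Φ = Q_ρ*(ξ‖x* − ŷ*‖) + inf_{γ>0} (1/γ)(Q_ρ*(γξ‖x*‖) + Q_ρ*(ξ‖x̂* − ŷ*‖))`, one has
`Φ = Q_ρ*(ξ min{‖x* − x̂*‖, ‖x*‖}) + ξ‖x*‖ min{ξ(‖x* − x̂*‖ − ‖x*‖)₊, ρ}` and
`Φ ≤ ξ² Q_{‖x*‖}*(‖x* − x̂*‖) − (1/2)(ξ min{‖x* − x̂*‖, ‖x*‖} − ρ)₊²`. -/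
theorem auxiliary_penalty_evaluation
    {F : Type*} [NormedAddCommGroup F] [NormedSpace ℝ F]
    (ρ : ℝ≥0∞) (hρ : 0 < ρ) (ξ : ℝ) (hξ : 0 < ξ)
    (xs xh : F)
    (lam : ℝ)
    (hlam : (xs = xh → lam = 1) ∧ (xs ≠ xh → lam = min (‖xs‖ / ‖xs - xh‖) 1))
    (yh : F) (hyh : yh = lam • xh + (1 - lam) • xs)
    (Phi : ℝ)
    (hPhi : Phi = Qstar ρ (ξ * ‖xs - yh‖) +
      ⨅ γ : {γ : ℝ // 0 < γ},
        (1 / γ.1) * (Qstar ρ (γ.1 * ξ * ‖xs‖) + Qstar ρ (ξ * ‖xh - yh‖))) :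
    Phi = Qstar ρ (ξ * min ‖xs - xh‖ ‖xs‖)
        + ξ * ‖xs‖ * (min (ENNReal.ofReal (ξ * max (‖xs - xh‖ - ‖xs‖) 0)) ρ).toReal
    ∧ Phi ≤ ξ ^ 2 * Qstar (ENNReal.ofReal ‖xs‖) ‖xs - xh‖
        - (1 / 2) * ((ENNReal.ofReal (ξ * min ‖xs - xh‖ ‖xs‖) - ρ).toReal) ^ 2 :=
  auxiliary_penalty_evaluation_general ρ ξ hξ xs xh lam hlam yh hyh Phi hPhi
end
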